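/- Let A B : Fin m → Fin n → ℝ and α > 0. Let Ã : Fin (m+n) → Fin n → ℝ be A stacked above D(α,0), and B̃ : Fin (m+n) → Fin n → ℝ be B stacked above D(α,−1). Then every x : Fin n → ℝ with (Ã⊗x) i = (B̃⊗x) i for all i ∈ Fin (m+n) is a stable solution of the stacked system: φ̃₀(x) = x, where φ̃₀ is the alternating-method step associated with the pair (Ã, B̃). -/

import Mathlib

/-! Every solution satisfies `x ≤ φ₀(x)`, since for each row `i` both `A i j + x j` and
`B i j + x j` lie below the common value `(A ⊗ x) i = (B ⊗ x) i`. Conversely, row `m + j` of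
`B̃` lies strictly below row `m + j` of `Ã` off the diagonal, so equality of the two products
there forces the maximum in `(B̃ ⊗ x) (m + j)` to be attained at `j`. Both products then
equal `α + x j`, and that row contributes `-α + (α + x j) = x j` to the minimum defining
`φ₀(x) j`. -/

open Finset

/-- Max-plus product of a real matrix with a real vector:
`(mpMul M x) i = max_k (M i k + x k)`. -/
noncomputable def mpMul {p n : ℕ} [NeZero p] [NeZero n]
    (M : Fin p → Fin n → ℝ) (x : Fin n → ℝ) : Fin p → ℝ :=
  fun i => univ.sup' univ_nonempty fun k => M i k + x k

/-- One step of the alternating method for the system `A ⊗ x = B ⊗ x`: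
`φ₀(x) j = min_i ( -max(A i j, B i j) + min((A⊗x) i, (B⊗x) i) )`. -/
noncomputable def phi0 {m n : ℕ} [NeZero m] [NeZero n]
    (A B : Fin m → Fin n → ℝ) (x : Fin n → ℝ) : Fin n → ℝ :=
  fun j => univ.inf' univ_nonempty fun i =>
    (-(max (A i j) (B i j))) + min (mpMul A x i) (mpMul B x i)

instance {m n : ℕ} [NeZero n] : NeZero (m + n) :=
  ⟨by have := NeZero.pos n; omega⟩

section MaxPlus

variable {p n : ℕ} [NeZero p] [NeZero n]

theorem add_le_mpMul (M : Fin p → Fin n → ℝ) (x : Fin n → ℝ) (i : Fin p) (k : Fin n) :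
    M i k + x k ≤ mpMul M x i :=
  le_sup' (fun k => M i k + x k) (mem_univ k)

theorem exists_mpMul_eq_add (M : Fin p → Fin n → ℝ) (x : Fin n → ℝ) (i : Fin p) :
    ∃ k, mpMul M x i = M i k + x k := by
  obtain ⟨k, -, hk⟩ := exists_mem_eq_sup' univ_nonempty fun k => M i k + x k
  exact ⟨k, hk⟩

theorem mpMul_eq_add_of_eq_of_lt {M N : Fin p → Fin n → ℝ} {x : Fin n → ℝ} {i : Fin p}
    {j : Fin n} (hlt : ∀ k ≠ j, N i k < M i k) (heq : mpMul M x i = mpMul N x i) :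
    mpMul N x i = N i j + x j := by
  obtain ⟨k, hk⟩ := exists_mpMul_eq_add N x i
  by_cases hkj : k = j
  · rw [hk, hkj]
  · have := add_le_mpMul M x i k
    linarith [hlt k hkj]

theorem phi0_le {A B : Fin p → Fin n → ℝ} (x : Fin n → ℝ) (i : Fin p) (j : Fin n) :
    phi0 A B x j ≤ -max (A i j) (B i j) + min (mpMul A x i) (mpMul B x i) :=
  inf'_le _ (mem_univ i)

theorem le_phi0_of_mpMul_eq {A B : Fin p → Fin n → ℝ} {x : Fin n → ℝ}
    (hx : ∀ i, mpMul A x i = mpMul B x i) : x ≤ phi0 A B x := by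
  intro j
  refine le_inf' _ _ fun i _ => ?_
  have hmax : max (A i j) (B i j) + x j ≤ mpMul A x i := by
    rw [← max_add_add_right]
    exact max_le (add_le_mpMul A x i j) (hx i ▸ add_le_mpMul B x i j)
  rw [← hx i, min_self]
  linarith

end MaxPlus

theorem stmt5_general {m n : ℕ} [NeZero m] [NeZero n]
    (A B : Fin m → Fin n → ℝ) (α : ℝ)
    (x : Fin n → ℝ)
    (hx : ∀ i : Fin (m + n),
      mpMul (Fin.append A (fun k i' => if i' = k then α else 0)) x i =
      mpMul (Fin.append B (fun k i' => if i' = k then α else (-1))) x i) :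
    phi0 (Fin.append A (fun k i' => if i' = k then α else 0))
         (Fin.append B (fun k i' => if i' = k then α else (-1))) x = x := by
  refine funext fun j => le_antisymm ?_ (le_phi0_of_mpMul_eq hx j)
  have hv := mpMul_eq_add_of_eq_of_lt (j := j)
    (fun k hk => by simp [Fin.append_right, hk]) (hx (Fin.natAdd m j))
  calc _ ≤ _ := phi0_le x (Fin.natAdd m j) j
    _ = x j := by rw [hx, hv]; simp [Fin.append_right]

theorem stmt5 {m n : ℕ} [NeZero m] [NeZero n]
    (A B : Fin m → Fin n → ℝ) (α : ℝ) (hα : 0 < α)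
    (x : Fin n → ℝ)
    (hx : ∀ i : Fin (m + n),
      mpMul (Fin.append A (fun k i' => if i' = k then α else 0)) x i =
      mpMul (Fin.append B (fun k i' => if i' = k then α else (-1))) x i) :
    phi0 (Fin.append A (fun k i' => if i' = k then α else 0))
         (Fin.append B (fun k i' => if i' = k then α else (-1))) x = x :=
  stmt5_general A B α x hx
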